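/- arXiv:1811.10331 — 2 statements merged into one kernel-verified Lean document; each statement's English description precedes it below -/
import Mathlib

section
/- Let h : ℝⁿ → ℝ ∪ {+∞} be a proper, lower semicontinuous convex function of Legendre type with C = int dom h, let 𝒜 = {x : Ax = b} be an affine subspace with direction 𝒜₀ = ker A such that F = C ∩ 𝒜 ≠ ∅, and let Π_{𝒜₀} denote the Euclidean orthogonal projection onto 𝒜₀. Then for every sequence (xʲ) ⊂ F converging to a point x* ∈ (bd C) ∩ 𝒜, one has ‖Π_{𝒜₀} ∇h(xʲ)‖ → ∞. Consequently, the restriction of h to 𝒜 (precomposed with any invertible affine parametrization T : ℝ^{n−m} → 𝒜) is a proper lower semicontinuous convex function of Legendre type on ℝ^{n−m} whose domain has interior T⁻¹(F). -/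
noncomputable section
open Set Filter Topology Matrix

abbrev E (n : ℕ) := EuclideanSpace ℝ (Fin n)

/-- A proper lower semicontinuous convex function (modelled by its finite values `g` and
its effective domain `dom`) is of *Legendre type* if it is (lsc, convex and) essentially
smooth — differentiable on `int dom` with gradient blowing up along sequences of
`int dom` approaching the boundary of `dom` — and strictly convex on `int dom`. -/
def IsLegendreType {r : ℕ} (g : E r → ℝ) (dom : Set (E r)) : Prop :=
  dom.Nonempty ∧ Convex ℝ dom ∧ ConvexOn ℝ dom g ∧ LowerSemicontinuousOn g dom ∧
  DifferentiableOn ℝ g (interior dom) ∧ StrictConvexOn ℝ (interior dom) g ∧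
  ∀ (z : ℕ → E r) (xstar : E r), (∀ j, z j ∈ interior dom) → xstar ∈ frontier dom →
    Tendsto z atTop (𝓝 xstar) →
    Tendsto (fun j => ‖gradient g (z j)‖) atTop atTop

/-!
Fix `y₀ ∈ F` and a closed ball `B(y₀, ε) ⊆ C` on which `h ≤ M`. For `z ∈ F` split
`∇h(z) = p + q` with `p ∈ 𝒜₀` and `q ⊥ 𝒜₀`. The gradient inequality at the test point
`y₀ + ε q / ‖q‖`, together with `z - y₀ ∈ 𝒜₀`, gives `ε ‖q‖ ≤ M - h(z) + ‖p‖ ‖z - y₀‖`, and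
`h(z)` is bounded below by the affine minorant of `h` at `y₀`. Along a convergent sequence
`‖∇h(z)‖` is therefore at most affine in `‖p‖`, so `‖∇h(z)‖ → ∞` forces `‖p‖ → ∞`.

For `T z = L z + w₀` one has `∇(h ∘ T) = L* (∇h ∘ T)`, and `‖p‖ ≤ c ‖L* ∇h‖` because `L*` is
injective on `range L = 𝒜₀`. The interior of `T⁻¹(dom h)` is `T⁻¹(C)`: if `dom h` contains
a point slightly beyond `x ∈ 𝒜` on the ray from `y₀ ∈ C`, then `x` lies on an open segment
starting at an interior point, hence in `C`.
-/

open Metric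
open scoped RealInnerProductSpace

theorem tendsto_atTop_of_le_add_mul {ι : Type*} {l : Filter ι} {f g : ι → ℝ} {a b : ℝ}
    (hb : 0 < b) (hg : Tendsto g l atTop) (hle : ∀ᶠ j in l, g j ≤ a + b * f j) :
    Tendsto f l atTop := by
  refine tendsto_atTop_mono' l (hle.mono fun j hj => ?_)
    ((tendsto_atTop_add_const_right l (-a) hg).atTop_div_const hb)
  rw [div_le_iff₀' hb]
  linarith

section AffinePreimage

variable {P Q : Type*} [NormedAddCommGroup P] [NormedSpace ℝ P]
  [NormedAddCommGroup Q] [NormedSpace ℝ Q]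

theorem Convex.mem_interior_of_lineMap_mem {s : Set Q} (hs : Convex ℝ s) {y x : Q}
    (hy : y ∈ interior s) {t : ℝ} (ht : 1 < t) (hx : AffineMap.lineMap y x t ∈ s) :
    x ∈ interior s := by
  refine hs.openSegment_interior_self_subset_interior hy hx ?_
  rw [openSegment_eq_image_lineMap]
  refine ⟨t⁻¹, ⟨by positivity, inv_lt_one_of_one_lt₀ ht⟩, ?_⟩
  rw [AffineMap.lineMap_lineMap_right, inv_mul_cancel₀ (by positivity),
    AffineMap.lineMap_apply_one]

theorem Convex.interior_preimage_affineMap {s : Set Q} (hs : Convex ℝ s) (T : P →ᵃ[ℝ] Q)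
    (hT : Continuous T) (hne : (range T ∩ interior s).Nonempty) :
    interior (T ⁻¹' s) = T ⁻¹' interior s := by
  refine Subset.antisymm (fun z hz => ?_) (preimage_interior_subset_interior_preimage hT)
  obtain ⟨_, ⟨z₀, rfl⟩, hz₀⟩ := hne
  obtain ⟨t, hts, ht⟩ : ∃ t : ℝ, AffineMap.lineMap z₀ z t ∈ T ⁻¹' s ∧ 1 < t :=
    (((AffineMap.lineMap_continuous.tendsto' 1 z (by simp)).eventually
      (mem_interior_iff_mem_nhds.1 hz)).filter_mono nhdsWithin_le_nhds |>.and
      (self_mem_nhdsWithin (s := Ioi 1))).exists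
  rw [mem_preimage, AffineMap.apply_lineMap] at hts
  exact hs.mem_interior_of_lineMap_mem hz₀ ht hts

theorem StrictConvexOn.comp_affineMap {f : Q → ℝ} {s : Set Q} (hf : StrictConvexOn ℝ s f)
    (T : P →ᵃ[ℝ] Q) (hT : Function.Injective T) : StrictConvexOn ℝ (T ⁻¹' s) (f ∘ T) :=
  ⟨hf.1.affine_preimage T, fun _ hx _ hy hxy _ _ ha hb hab => by
    simpa only [Function.comp, Convex.combo_affine_apply hab] using
      hf.2 hx hy (hT.ne hxy) ha hb hab⟩

end AffinePreimage

section Gradient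

variable {F : Type*} [NormedAddCommGroup F] [InnerProductSpace ℝ F]

theorem Submodule.real_inner_starProjection_self (K : Submodule ℝ F)
    [K.HasOrthogonalProjection] (v : F) :
    ⟪K.starProjection v, v⟫ = ‖K.starProjection v‖ ^ 2 := by
  simpa using K.re_inner_starProjection_eq_normSq v

variable [CompleteSpace F]

theorem ConvexOn.inner_gradient_le_sub {f : F → ℝ} {s : Set F} (hf : ConvexOn ℝ s f)
    {x y : F} (hx : x ∈ s) (hy : y ∈ s) (hd : DifferentiableAt ℝ f x) :
    ⟪gradient f x, y - x⟫ ≤ f y - f x := by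
  let ℓ : ℝ →ᵃ[ℝ] F := AffineMap.lineMap x y
  have hderiv : HasDerivAt (f ∘ ℓ) ⟪gradient f x, y - x⟫ 0 := by
    have := hd.hasGradientAt.hasFDerivAt
    rw [← AffineMap.lineMap_apply_zero (k := ℝ) x y] at this
    simpa using this.comp_hasDerivAt (0 : ℝ) AffineMap.hasDerivAt_lineMap
  simpa [slope, ℓ] using (hf.comp_affineMap ℓ).le_slope_of_hasDerivAt (x := 0) (y := 1)
    (by simpa [ℓ]) (by simpa [ℓ]) one_pos hderiv

variable {K : Submodule ℝ F} [K.HasOrthogonalProjection]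

theorem ConvexOn.mul_norm_starProjection_orthogonal_gradient_le {f : F → ℝ} {s : Set F}
    (hf : ConvexOn ℝ s f) {y₀ z : F} {ε M : ℝ} (hε : 0 < ε) (hball : closedBall y₀ ε ⊆ s)
    (hM : ∀ y ∈ closedBall y₀ ε, f y ≤ M) (hz : z ∈ s) (hd : DifferentiableAt ℝ f z)
    (hzK : z - y₀ ∈ K) :
    ε * ‖Kᗮ.starProjection (gradient f z)‖ ≤
      M - f z + ‖K.starProjection (gradient f z)‖ * ‖z - y₀‖ := by
  set w := gradient f z
  set q := Kᗮ.starProjection w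
  set u := ‖q‖⁻¹ • q
  have hu : ‖u‖ ≤ 1 := by
    rcases eq_or_ne q 0 with hq | hq
    · simp [u, hq]
    · simp [u, norm_smul, hq]
  have hwu : ⟪w, u⟫ = ‖q‖ := by
    rcases eq_or_ne q 0 with hq | hq
    · simp [u, hq]
    · rw [real_inner_smul_right, real_inner_comm, Kᗮ.real_inner_starProjection_self, sq,
        inv_mul_cancel_left₀ (norm_ne_zero_iff.2 hq)]
  have hwz : ⟪w, y₀ - z⟫ = ⟪K.starProjection w, y₀ - z⟫ := by
    rw [K.inner_starProjection_left_eq_right,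
      K.starProjection_eq_self_iff.2 (by simpa using K.neg_mem hzK)]
  have hy : y₀ + ε • u ∈ closedBall y₀ ε := by
    simpa [norm_smul, abs_of_pos hε] using mul_le_of_le_one_right hε.le hu
  have hgrad := hf.inner_gradient_le_sub hz (hball hy) hd
  rw [show y₀ + ε • u - z = (y₀ - z) + ε • u by abel, inner_add_right, real_inner_smul_right,
    hwu, hwz] at hgrad
  have hp := neg_le_of_abs_le (abs_real_inner_le_norm (K.starProjection w) (y₀ - z))
  rw [norm_sub_rev] at hp
  linarith [hM _ hy]

theorem ConvexOn.tendsto_norm_starProjection_gradient_atTop {ι : Type*} {l : Filter ι}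
    {f : F → ℝ} {s : Set F} (hf : ConvexOn ℝ s f) (hd : DifferentiableOn ℝ f (interior s))
    {y₀ x : F} (hy₀ : y₀ ∈ interior s) {z : ι → F} (hz : ∀ j, z j ∈ interior s)
    (hzK : ∀ j, z j - y₀ ∈ K) (hzx : Tendsto z l (𝓝 x))
    (hgrad : Tendsto (fun j => ‖gradient f (z j)‖) l atTop) :
    Tendsto (fun j => ‖K.starProjection (gradient f (z j))‖) l atTop := by
  have hdiff : ∀ y ∈ interior s, DifferentiableAt ℝ f y := fun y hy =>
    (hd y hy).differentiableAt (isOpen_interior.mem_nhds hy)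
  obtain ⟨ε, hε, hball⟩ : ∃ ε > 0, closedBall y₀ ε ⊆ interior s ∩ {y | f y < f y₀ + 1} :=
    nhds_basis_closedBall.mem_iff.1 <| inter_mem (isOpen_interior.mem_nhds hy₀)
      ((hdiff y₀ hy₀).continuousAt.eventually (gt_mem_nhds (lt_add_one _)))
  set g₀ := gradient f y₀
  set R := ‖x - y₀‖ + 1
  have hR : ∀ᶠ j in l, ‖z j - y₀‖ ≤ R :=
    ((hzx.sub_const y₀).norm.eventually (eventually_lt_nhds (lt_add_one _))).mono
      fun _ h => h.le
  refine tendsto_atTop_of_le_add_mul (g := fun j => ε * ‖gradient f (z j)‖)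
    (a := 1 + ‖g₀‖ * R) (b := ε + R) (by positivity) (hgrad.const_mul_atTop hε) ?_
  filter_upwards [hR] with j hj
  set w := gradient f (z j)
  have hq := hf.mul_norm_starProjection_orthogonal_gradient_le hε
    (hball.trans (inter_subset_left.trans interior_subset)) (fun y hy => (hball hy).2.le)
    (interior_subset (hz j)) (hdiff _ (hz j)) (hzK j)
  have hlow : f y₀ - ‖g₀‖ * ‖z j - y₀‖ ≤ f (z j) := by
    have := hf.inner_gradient_le_sub (interior_subset hy₀) (interior_subset (hz j)) (hdiff _ hy₀)
    linarith [neg_le_of_abs_le (abs_real_inner_le_norm g₀ (z j - y₀))]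
  have hw : ‖w‖ ≤ ‖K.starProjection w‖ + ‖Kᗮ.starProjection w‖ := by
    simpa only [K.starProjection_add_starProjection_orthogonal] using
      norm_add_le (K.starProjection w) (Kᗮ.starProjection w)
  have := mul_le_mul_of_nonneg_left hw hε.le
  have := mul_le_mul_of_nonneg_left hj (norm_nonneg (K.starProjection w))
  have := mul_le_mul_of_nonneg_left hj (norm_nonneg g₀)
  linarith

end Gradient

section FiniteDimensional

variable {G H : Type*} [NormedAddCommGroup G] [InnerProductSpace ℝ G] [FiniteDimensional ℝ G]
  [NormedAddCommGroup H] [InnerProductSpace ℝ H] [FiniteDimensional ℝ H]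

theorem LinearMap.exists_norm_starProjection_range_le_norm_adjoint (L : G →ₗ[ℝ] H)
    (hL : Function.Injective L) :
    ∃ c > 0, ∀ w, ‖(range L).starProjection w‖ ≤ c * ‖LinearMap.adjoint L w‖ := by
  obtain ⟨C, hC, hanti⟩ := L.injective_iff_antilipschitz.1 hL
  refine ⟨C, hC, fun w => ?_⟩
  set p := (range L).starProjection w
  obtain ⟨u, hu⟩ : p ∈ range L := (range L).starProjection_apply_mem w
  have hsq : ‖p‖ * ‖p‖ ≤ C * ‖LinearMap.adjoint L w‖ * ‖p‖ := calc
    ‖p‖ * ‖p‖ = ⟪u, LinearMap.adjoint L w⟫ := by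
      rw [LinearMap.adjoint_inner_right, hu, ← sq, ← (range L).real_inner_starProjection_self]
    _ ≤ ‖u‖ * ‖LinearMap.adjoint L w‖ := real_inner_le_norm _ _
    _ ≤ C * ‖p‖ * ‖LinearMap.adjoint L w‖ := by
      gcongr; rw [← hu]; exact ZeroHomClass.bound_of_antilipschitz L hanti u
    _ = C * ‖LinearMap.adjoint L w‖ * ‖p‖ := by ring
  rcases (norm_nonneg p).eq_or_lt with hp | hp
  · rw [← hp]; positivity
  · exact le_of_mul_le_mul_right hsq hp

theorem gradient_comp_linearMap_add {f : H → ℝ} (L : G →ₗ[ℝ] H) (w₀ : H) {z : G}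
    (hd : DifferentiableAt ℝ f (L z + w₀)) :
    gradient (fun z => f (L z + w₀)) z = LinearMap.adjoint L (gradient f (L z + w₀)) := by
  refine HasGradientAt.gradient ?_
  refine (hd.hasGradientAt.hasFDerivAt.comp z
    (L.toContinuousLinearMap.hasFDerivAt.add_const w₀)).congr_fderiv ?_
  ext u
  simp [LinearMap.adjoint_inner_left]

end FiniteDimensional

theorem Convex.interior_preimage_linearMap_add {G H : Type*} [NormedAddCommGroup G]
    [NormedSpace ℝ G] [FiniteDimensional ℝ G] [NormedAddCommGroup H] [NormedSpace ℝ H]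
    {s : Set H} (hs : Convex ℝ s) (L : G →ₗ[ℝ] H) (w₀ : H)
    (hne : (range (fun z => L z + w₀) ∩ interior s).Nonempty) :
    interior ((fun z => L z + w₀) ⁻¹' s) = (fun z => L z + w₀) ⁻¹' interior s :=
  hs.interior_preimage_affineMap (L.toAffineMap + AffineMap.const ℝ G w₀)
    (AffineMap.continuous_of_finiteDimensional _) hne

theorem IsLegendreType.comp_linearMap_add {k r : ℕ} {h : E r → ℝ} {dom : Set (E r)}
    (hh : IsLegendreType h dom) {L : E k →ₗ[ℝ] E r} (hL : Function.Injective L) {w₀ : E r}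
    (hne : (range (fun z => L z + w₀) ∩ interior dom).Nonempty) :
    IsLegendreType (fun z => h (L z + w₀)) ((fun z => L z + w₀) ⁻¹' dom) := by
  obtain ⟨-, hconv, hconvOn, hlsc, hdiff, hstrict, hblow⟩ := hh
  let T : E k →ᵃ[ℝ] E r := L.toAffineMap + AffineMap.const ℝ (E k) w₀
  have hTc : Continuous T := T.continuous_of_finiteDimensional
  have hint := hconv.interior_preimage_linearMap_add L w₀ hne
  obtain ⟨_, ⟨z₀, rfl⟩, hz₀⟩ := hne
  refine ⟨⟨z₀, show L z₀ + w₀ ∈ dom from interior_subset hz₀⟩, hconv.affine_preimage T,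
    hconvOn.comp_affineMap T, hlsc.comp hTc.continuousOn (mapsTo_preimage _ _), ?_, ?_, ?_⟩
  · rw [hint]
    exact hdiff.comp (L.toContinuousLinearMap.differentiable.add_const w₀).differentiableOn
      (mapsTo_preimage _ _)
  · rw [hint]
    exact hstrict.comp_affineMap T fun x y hxy => hL (add_right_cancel hxy)
  · intro z x hz hx hzx
    simp only [hint, mem_preimage] at hz
    have hfr : L x + w₀ ∈ frontier dom :=
      ⟨hTc.closure_preimage_subset _ hx.1, fun hi => hx.2 (hint ▸ hi)⟩
    have hTzx := (hTc.tendsto x).comp hzx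
    have hproj := hconvOn.tendsto_norm_starProjection_gradient_atTop (K := LinearMap.range L)
      hdiff hz₀ hz (fun j => LinearMap.mem_range.2 ⟨z j - z₀, by simp⟩) hTzx (hblow _ _ hz hfr hTzx)
    obtain ⟨c, hc, hbound⟩ := L.exists_norm_starProjection_range_le_norm_adjoint hL
    refine tendsto_atTop_of_le_add_mul (a := 0) hc hproj (Eventually.of_forall fun j => ?_)
    rw [zero_add, gradient_comp_linearMap_add L w₀
      ((hdiff _ (hz j)).differentiableAt (isOpen_interior.mem_nhds (hz j)))]
    exact hbound _

theorem stmt18_general (n m : ℕ)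
    (A : Matrix (Fin m) (Fin n) ℝ) (b : Fin m → ℝ)
    (h : E n → ℝ) (domh : Set (E n))
    (hLeg : IsLegendreType h domh)
    (hFne : (interior domh ∩ {x | A.mulVec x = b}).Nonempty) :
    -- the projected gradient blows up at boundary points of `C` lying on `𝒜`
    (∀ (z : ℕ → E n) (xstar : E n),
      (∀ j, z j ∈ interior domh ∩ {x | A.mulVec x = b}) →
      xstar ∈ frontier (interior domh) → A.mulVec xstar = b →
      Tendsto z atTop (𝓝 xstar) →
      Tendsto (fun j =>
        ‖((Submodule.orthogonalProjectionOnto (LinearMap.ker (Matrix.toEuclideanLin A))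
            (gradient h (z j)) : E n))‖) atTop atTop) ∧
    -- consequently `h∘T` is of Legendre type on `ℝ^{n−m}`, with
    -- `int dom (h∘T) = T⁻¹(F)`, for any invertible affine parametrization `T` of `𝒜`
    (∀ (Lp : E (n - m) →ₗ[ℝ] E n) (w0 : E n), Function.Injective Lp →
      LinearMap.range Lp = LinearMap.ker (Matrix.toEuclideanLin A) →
      A.mulVec w0 = b →
      IsLegendreType (fun z => h (Lp z + w0)) ((fun z => Lp z + w0) ⁻¹' domh) ∧
      interior ((fun z => Lp z + w0) ⁻¹' domh) =
        (fun z => Lp z + w0) ⁻¹' (interior domh ∩ {x | A.mulVec x = b})) := by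
  set K := LinearMap.ker (Matrix.toEuclideanLin A)
  have hK : ∀ v : E n, v ∈ K ↔ A.mulVec v = 0 := fun v => by simp [K, Matrix.toLpLin_apply]
  have hsub : ∀ x y : E n, A.mulVec x = b → A.mulVec y = b → x - y ∈ K := fun x y hx hy =>
    (hK _).2 (by simp [Matrix.mulVec_sub, hx, hy])
  obtain ⟨y₀, hy₀, hy₀A⟩ := hFne
  refine ⟨fun z x hz hx _ hzx => ?_, fun L w₀ hL hrange hw₀ => ?_⟩
  · obtain ⟨-, -, hconvOn, -, hdiff, -, hblow⟩ := hLeg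
    simpa only [← K.starProjection_apply] using
      hconvOn.tendsto_norm_starProjection_gradient_atTop hdiff hy₀ (fun j => (hz j).1)
        (fun j => hsub _ _ (hz j).2 hy₀A) hzx
        (hblow z x (fun j => (hz j).1) (frontier_interior_subset hx) hzx)
  · have hTA : ∀ z, A.mulVec (L z + w₀) = b := fun z => by
      simp [Matrix.mulVec_add, (hK _).1 (hrange ▸ LinearMap.mem_range_self L z), hw₀]
    have hne : (range (fun z => L z + w₀) ∩ interior domh).Nonempty := by
      obtain ⟨u, hu⟩ : y₀ - w₀ ∈ LinearMap.range L := hrange ▸ hsub _ _ hy₀A hw₀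
      exact ⟨y₀, ⟨u, by simp [hu]⟩, hy₀⟩
    refine ⟨hLeg.comp_linearMap_add hL hne, ?_⟩
    rw [hLeg.2.1.interior_preimage_linearMap_add L w₀ hne, preimage_inter]
    ext z
    simp [hTA z]

/-- Proposition `P:leg-trans2`.  Let `h` be of Legendre type with
`C = int dom h`, `𝒜 = {x : Ax = b}` with `F = C ∩ 𝒜 ≠ ∅`, and `Π` the orthogonal
projection onto `𝒜₀ = ker A`.  Then `‖Π ∇h(xʲ)‖ → ∞` for every sequence of `F`
converging to a point of `(bd C) ∩ 𝒜`; consequently, for any invertible affine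
parametrization `T : ℝ^{n−m} → 𝒜`, `h ∘ T` is of Legendre type with
`int dom (h∘T) = T⁻¹(F)`. -/
theorem stmt18 (n m : ℕ) (hm : 0 < m) (hmn : m < n)
    (A : Matrix (Fin m) (Fin n) ℝ) (hrank : A.rank = m) (b : Fin m → ℝ)
    (h : E n → ℝ) (domh : Set (E n))
    (hLeg : IsLegendreType h domh)
    (hFne : (interior domh ∩ {x | A.mulVec x = b}).Nonempty) :
    -- the projected gradient blows up at boundary points of `C` lying on `𝒜`
    (∀ (z : ℕ → E n) (xstar : E n),
      (∀ j, z j ∈ interior domh ∩ {x | A.mulVec x = b}) →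
      xstar ∈ frontier (interior domh) → A.mulVec xstar = b →
      Tendsto z atTop (𝓝 xstar) →
      Tendsto (fun j =>
        ‖((Submodule.orthogonalProjectionOnto (LinearMap.ker (Matrix.toEuclideanLin A))
            (gradient h (z j)) : E n))‖) atTop atTop) ∧
    -- consequently `h∘T` is of Legendre type on `ℝ^{n−m}`, with
    -- `int dom (h∘T) = T⁻¹(F)`, for any invertible affine parametrization `T` of `𝒜`
    (∀ (Lp : E (n - m) →ₗ[ℝ] E n) (w0 : E n), Function.Injective Lp →
      LinearMap.range Lp = LinearMap.ker (Matrix.toEuclideanLin A) →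
      A.mulVec w0 = b →
      IsLegendreType (fun z => h (Lp z + w0)) ((fun z => Lp z + w0) ⁻¹' domh) ∧
      interior ((fun z => Lp z + w0) ⁻¹' domh) =
        (fun z => Lp z + w0) ⁻¹' (interior domh ∩ {x | A.mulVec x = b})) :=
  stmt18_general n m A b h domh hLeg hFne
end
end

section
/- Let H be a symmetric positive definite n×n real matrix, A a real m×n matrix of full rank m < n, c ∈ ℝⁿ, and let Π denote the Euclidean orthogonal projection of ℝⁿ onto ker A. Then the matrix A H⁻¹ Aᵀ is invertible and Π H · (H⁻¹[I − Aᵀ(A H⁻¹ Aᵀ)⁻¹ A H⁻¹] c) = Π c. In other words, the push-forward under the Legendre transform coordinates map φ_h(x) = Π ∇h(x) of the Riemannian gradient vector field ∇_H f(x) = H⁻¹[I − Aᵀ(A H⁻¹ Aᵀ)⁻¹ A H⁻¹] c of a linear function f(x) = ⟨c, x⟩ is the constant vector field Π c. -/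
/-! Since `H H⁻¹ = 1`, the vector being projected is `c - Aᵀ w` with
`w = (A H⁻¹ Aᵀ)⁻¹ A H⁻¹ c`, and `Im Aᵀ = (ker A)ᗮ` is annihilated by the projection.
Invertibility of `A H⁻¹ Aᵀ` holds because it is positive definite, the rows of `A` being
linearly independent. -/

noncomputable section
open Set Filter Topology Matrix

/-- Action of a matrix on a vector of `EuclideanSpace ℝ (Fin n)`. -/
def matVec {n : ℕ} (M : Matrix (Fin n) (Fin n) ℝ) (v : E n) : E n := WithLp.toLp 2 (M.mulVec v)

namespace Matrix

variable {m n : Type*} [Fintype m] [Fintype n]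

theorem vecMul_injective_of_rank_eq_card {K : Type*} [Field K] {A : Matrix m n K}
    (hA : A.rank = Fintype.card m) : Function.Injective A.vecMul :=
  vecMul_injective_iff.mpr <| linearIndependent_iff_card_eq_finrank_span.mpr <| by
    rw [Set.finrank, ← rank_eq_finrank_span_row, hA]

theorem PosDef.mul_mul_transpose_of_rank_eq_card {M : Matrix n n ℝ} (hM : M.PosDef)
    {A : Matrix m n ℝ} (hA : A.rank = Fintype.card m) : (A * M * Aᵀ).PosDef := by
  simpa only [conjTranspose_eq_transpose_of_trivial] using
    hM.mul_mul_conjTranspose_same (vecMul_injective_of_rank_eq_card hA)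

theorem toEuclideanLin_conjTranspose_mem_orthogonal_ker {𝕜 : Type*} [RCLike 𝕜]
    [DecidableEq m] [DecidableEq n] (A : Matrix m n 𝕜) (w : EuclideanSpace 𝕜 m) :
    toEuclideanLin Aᴴ w ∈ (LinearMap.ker (toEuclideanLin A))ᗮ := by
  rw [LinearMap.orthogonal_ker, ← toEuclideanLin_conjTranspose_eq_adjoint]
  exact LinearMap.mem_range_self _ w

end Matrix

theorem matVec_matVec {n : ℕ} (M N : Matrix (Fin n) (Fin n) ℝ) (v : E n) :
    matVec M (matVec N v) = matVec (M * N) v := by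
  simp only [matVec, WithLp.ofLp_toLp, mulVec_mulVec]

theorem orthogonalProjectionOnto_ker_matVec_inv_mul_sub_transpose_mul {m n : ℕ}
    {H : Matrix (Fin n) (Fin n) ℝ} (hH : IsUnit H.det) (A B : Matrix (Fin m) (Fin n) ℝ)
    (c : E n) :
    (Submodule.orthogonalProjectionOnto (LinearMap.ker (toEuclideanLin A))
        (matVec H (matVec (H⁻¹ * (1 - Aᵀ * B)) c)) : E n) =
      (Submodule.orthogonalProjectionOnto (LinearMap.ker (toEuclideanLin A)) c : E n) := by
  have hvec : matVec H (matVec (H⁻¹ * (1 - Aᵀ * B)) c) =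
      c - toEuclideanLin Aᴴ (WithLp.toLp 2 (B *ᵥ c)) := by
    rw [matVec_matVec, mul_nonsing_inv_cancel_left _ _ hH, conjTranspose_eq_transpose_of_trivial]
    simp only [matVec, toLpLin_apply, sub_mulVec, one_mulVec, mulVec_mulVec,
      WithLp.toLp_sub, WithLp.toLp_ofLp]
  rw [hvec, map_sub, Submodule.orthogonalProjectionOnto_apply_of_mem_orthogonal
    (toEuclideanLin_conjTranspose_mem_orthogonal_ker A _), sub_zero]

theorem stmt19_general (n m : ℕ)
    (H : Matrix (Fin n) (Fin n) ℝ) (hH : H.PosDef)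
    (A : Matrix (Fin m) (Fin n) ℝ) (hrank : A.rank = m)
    (c : E n) :
    IsUnit (A * H⁻¹ * Aᵀ) ∧
    (Submodule.orthogonalProjectionOnto (LinearMap.ker (Matrix.toEuclideanLin A))
        (matVec H (matVec (H⁻¹ * (1 - Aᵀ * (A * H⁻¹ * Aᵀ)⁻¹ * A * H⁻¹)) c)) : E n) =
      (Submodule.orthogonalProjectionOnto (LinearMap.ker (Matrix.toEuclideanLin A)) c : E n) := by
  have hS : (A * H⁻¹ * Aᵀ).PosDef :=
    hH.inv.mul_mul_transpose_of_rank_eq_card (by rw [hrank, Fintype.card_fin])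
  refine ⟨hS.isUnit, ?_⟩
  rw [show Aᵀ * (A * H⁻¹ * Aᵀ)⁻¹ * A * H⁻¹ = Aᵀ * ((A * H⁻¹ * Aᵀ)⁻¹ * A * H⁻¹) by
    simp only [Matrix.mul_assoc]]
  exact orthogonalProjectionOnto_ker_matVec_inv_mul_sub_transpose_mul hH.det_pos.ne'.isUnit A _ c

/-- Proposition `P:pushforward`.  For a symmetric positive definite
`H`, a full rank `m×n` matrix `A` (`m < n`), and `Π` the orthogonal projection onto
`ker A`, the matrix `A H⁻¹ Aᵀ` is invertible and
`Π H (H⁻¹[I − Aᵀ(A H⁻¹ Aᵀ)⁻¹ A H⁻¹] c) = Π c`: the push-forward under the Legendre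
transform coordinates of the Riemannian gradient of a linear function is constant. -/
theorem stmt19 (n m : ℕ) (hm : 0 < m) (hmn : m < n)
    (H : Matrix (Fin n) (Fin n) ℝ) (hH : H.PosDef)
    (A : Matrix (Fin m) (Fin n) ℝ) (hrank : A.rank = m)
    (c : E n) :
    IsUnit (A * H⁻¹ * Aᵀ) ∧
    (Submodule.orthogonalProjectionOnto (LinearMap.ker (Matrix.toEuclideanLin A))
        (matVec H (matVec (H⁻¹ * (1 - Aᵀ * (A * H⁻¹ * Aᵀ)⁻¹ * A * H⁻¹)) c)) : E n) =
      (Submodule.orthogonalProjectionOnto (LinearMap.ker (Matrix.toEuclideanLin A)) c : E n) :=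
  stmt19_general n m H hH A hrank c
end
end
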